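/- arXiv:1210.5189 — 2 statements merged into one kernel-verified Lean document; each statement's English description precedes it below -/
import Mathlib

section
/- With ψ, V and S as defined, for every m ≥ 1 one has ψᵀ V ψ = Tr(S^m); that is, Σ_{σ,τ} ψ(σ) V(σ,τ) ψ(τ) = Tr(S^m), where σ, τ range over all maps Fin m → Fin 2. -/
/-- `ψ(σ)` is the trace of the cyclic product
`F(σ₀,σ₁) F(σ₁,σ₂) ⋯ F(σ_{m-1},σ₀)`; the cyclic successor is given by
`finRotate`. -/
noncomputable def psiVec {n : ℕ} (m : ℕ)
    (F : Fin 2 → Fin 2 → Matrix (Fin n) (Fin n) ℝ)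
    (σ : Fin m → Fin 2) : ℝ :=
  Matrix.trace (List.ofFn fun i : Fin m => F (σ i) (σ (finRotate m i))).prod

/-- The column transfer matrix `V`, indexed by `Fin m → Fin 2`, with
`V(σ,τ) = Π_i ω(σ(i+1),τ(i+1);σ(i),τ(i))` (indices cyclic modulo `m`); the
face weight `ω a b c d` means `ω(a,b;c,d)` with top row `a,b` and bottom row
`c,d`. -/
def Vmat (m : ℕ) (ω : Fin 2 → Fin 2 → Fin 2 → Fin 2 → ℝ) :
    Matrix (Fin m → Fin 2) (Fin m → Fin 2) ℝ :=
  Matrix.of fun σ τ =>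
    ∏ i : Fin m, ω (σ (finRotate m i)) (τ (finRotate m i)) (σ i) (τ i)

/-- The matrix `S`, indexed by `Fin n × (Fin 2 × Fin 2) × Fin n`, with
`S((α,(a,a'),α'),(β,(b,b'),β')) = F(a,b)(α,β) · ω(b,b';a,a') · F(a',b')(α',β')`. -/
def Smat (n : ℕ) (F : Fin 2 → Fin 2 → Matrix (Fin n) (Fin n) ℝ)
    (ω : Fin 2 → Fin 2 → Fin 2 → Fin 2 → ℝ) :
    Matrix (Fin n × (Fin 2 × Fin 2) × Fin n) (Fin n × (Fin 2 × Fin 2) × Fin n) ℝ :=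
  Matrix.of fun p q =>
    F p.2.1.1 q.2.1.1 p.1 q.1 * ω q.2.1.1 q.2.1.2 p.2.1.1 p.2.1.2 *
      F p.2.1.2 q.2.1.2 p.2.2 q.2.2

/-! Expanding a trace of a product of matrices as a sum over closed paths, `ψ(σ) V(σ,τ) ψ(τ)`
becomes a sum over pairs of closed paths `α, β : Fin m → Fin n` of
`∏ᵢ F(σᵢ,σᵢ₊₁)(αᵢ,αᵢ₊₁) · ω(σᵢ₊₁,τᵢ₊₁;σᵢ,τᵢ) · F(τᵢ,τᵢ₊₁)(βᵢ,βᵢ₊₁) = ∏ᵢ S(pᵢ,pᵢ₊₁)`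
with `pᵢ = (αᵢ,(σᵢ,τᵢ),βᵢ)`. Summing over `σ, τ, α, β` is summing over all closed paths `p`
of length `m` in the index set of `S`, which gives `Tr(S^m)`. -/

open Matrix Finset

section PathExpansion

variable {ι R : Type*} [Fintype ι] [DecidableEq ι] [CommSemiring R]

theorem Matrix.list_ofFn_prod_mulVec_apply {k : ℕ} (M : Fin k → Matrix ι ι R) (v : ι → R)
    (a : ι) :
    ((List.ofFn M).prod *ᵥ v) a =
      ∑ p : Fin k → ι, (∏ i, M i ((Fin.cons a p : Fin (k + 1) → ι) i.castSucc) (p i)) *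
        v ((Fin.cons a p : Fin (k + 1) → ι) (Fin.last k)) := by
  induction k generalizing a with
  | zero => simp
  | succ k ih =>
    rw [List.ofFn_succ, List.prod_cons, ← mulVec_mulVec, mulVec, dotProduct,
      ← (Fin.consEquiv fun _ => ι).sum_comp, Fintype.sum_prod_type]
    refine sum_congr rfl fun b _ => ?_
    simp only [ih, mul_sum, Fin.consEquiv, Equiv.coe_fn_mk, Fin.prod_univ_succ,
      Fin.cons_zero, Fin.cons_succ, Fin.castSucc_zero, ← Fin.succ_castSucc, ← Fin.succ_last,
      mul_assoc]

theorem Matrix.trace_list_ofFn_prod {k : ℕ} (M : Fin (k + 1) → Matrix ι ι R) :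
    trace (List.ofFn M).prod =
      ∑ p : Fin (k + 1) → ι, ∏ i, M i (p i) (p (finRotate (k + 1) i)) := by
  have diag_eq_mulVec (a : ι) : (List.ofFn M).prod a a =
      ((List.ofFn fun i => M i.castSucc).prod *ᵥ fun b => M (Fin.last k) b a) a := by
    rw [List.ofFn_succ', List.prod_concat, mul_apply]
    rfl
  rw [trace, ← (Fin.consEquiv fun _ => ι).sum_comp, Fintype.sum_prod_type]
  simp only [diag_apply, diag_eq_mulVec, list_ofFn_prod_mulVec_apply]
  refine sum_congr rfl fun a _ => sum_congr rfl fun p _ => ?_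
  simp [Fin.prod_univ_castSucc, Fin.coeSucc_eq_succ, Fin.consEquiv]

theorem Matrix.trace_pow_succ (A : Matrix ι ι R) (k : ℕ) :
    trace (A ^ (k + 1)) =
      ∑ p : Fin (k + 1) → ι, ∏ i, A (p i) (p (finRotate (k + 1) i)) := by
  rw [← List.prod_replicate, ← List.ofFn_const, trace_list_ofFn_prod]

end PathExpansion

theorem Fintype.sum_pi_prod {κ α β M : Type*} [Fintype κ] [DecidableEq κ] [Fintype α]
    [Fintype β] [AddCommMonoid M] (f : (κ → α × β) → M) :
    ∑ p, f p = ∑ a : κ → α, ∑ b : κ → β, f fun i => (a i, b i) := by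
  rw [← (Equiv.arrowProdEquivProdArrow κ _ _).symm.sum_comp, Fintype.sum_prod_type]
  rfl

theorem psi_V_psi_eq_trace_pow_general (n m : ℕ) (hm : 1 ≤ m)
    (F : Fin 2 → Fin 2 → Matrix (Fin n) (Fin n) ℝ)
    (ω : Fin 2 → Fin 2 → Fin 2 → Fin 2 → ℝ) :
    ∑ σ : Fin m → Fin 2, ∑ τ : Fin m → Fin 2,
      psiVec m F σ * Vmat m ω σ τ * psiVec m F τ =
    Matrix.trace (Smat n F ω ^ m) := by
  obtain ⟨k, rfl⟩ := Nat.exists_eq_add_of_le' hm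
  have psiVec_eq (σ : Fin (k + 1) → Fin 2) : psiVec (k + 1) F σ =
      ∑ α : Fin (k + 1) → Fin n, ∏ i, F (σ i) (σ (finRotate _ i)) (α i) (α (finRotate _ i)) :=
    trace_list_ofFn_prod _
  calc _ = ∑ σ : Fin (k + 1) → Fin 2, ∑ τ : Fin (k + 1) → Fin 2, ∑ α : Fin (k + 1) → Fin n,
        ∑ β : Fin (k + 1) → Fin n, ∏ i,
          F (σ i) (σ (finRotate _ i)) (α i) (α (finRotate _ i)) *
          ω (σ (finRotate _ i)) (τ (finRotate _ i)) (σ i) (τ i) *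
          F (τ i) (τ (finRotate _ i)) (β i) (β (finRotate _ i)) := by
        simp only [psiVec_eq, Vmat, of_apply, sum_mul, mul_sum, prod_mul_distrib]
        exact sum_congr rfl fun σ _ => sum_congr rfl fun τ _ => sum_comm
    _ = trace (Smat n F ω ^ (k + 1)) := by
      rw [sum_congr rfl fun σ _ => sum_comm, sum_comm, trace_pow_succ]
      simp only [Fintype.sum_pi_prod, Smat, of_apply]

/-- For all `n, m ≥ 1`: `ψᵀ V ψ = Tr(S^m)`. -/
theorem psi_V_psi_eq_trace_pow (n m : ℕ) (hn : 1 ≤ n) (hm : 1 ≤ m)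
    (F : Fin 2 → Fin 2 → Matrix (Fin n) (Fin n) ℝ)
    (ω : Fin 2 → Fin 2 → Fin 2 → Fin 2 → ℝ) :
    ∑ σ : Fin m → Fin 2, ∑ τ : Fin m → Fin 2,
      psiVec m F σ * Vmat m ω σ τ * psiVec m F τ =
    Matrix.trace (Smat n F ω ^ m) :=
  psi_V_psi_eq_trace_pow_general n m hm F ω
end

section
/- Suppose ω(a,b;c,d) = ω(b,a;d,c) for all a,b,c,d ∈ Fin 2 (so that the column transfer matrix V is symmetric), and suppose Tr(R^m) > 0. Then the largest eigenvalue Λ(m) of V satisfies Λ(m) ≥ Tr(S^m) / Tr(R^m). -/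
/-- The matrix `R`, indexed by `Fin n × Fin 2 × Fin n`, with
`R((α,a,α'),(β,b,β')) = F(a,b)(α,β) · F(a,b)(α',β')`. -/
def Rmat (n : ℕ) (F : Fin 2 → Fin 2 → Matrix (Fin n) (Fin n) ℝ) :
    Matrix (Fin n × Fin 2 × Fin n) (Fin n × Fin 2 × Fin n) ℝ :=
  Matrix.of fun p q => F p.2.1 q.2.1 p.1 q.1 * F p.2.1 q.2.1 p.2.2 q.2.2

/-! Put `x σ = Tr(F(σ₀,σ₁) F(σ₁,σ₂) ⋯ F(σ_{m-1},σ₀))`. Expanding the traces of `R^m` and `S^m`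
as sums over closed walks, the walk in the product index splits into walks in its factors, which
gives `Tr(R^m) = x ⬝ x` and `Tr(S^m) = x ⬝ V x`. The claim is then the Rayleigh bound
`x ⬝ V x ≤ Λ (x ⬝ x)` for the symmetric matrix `V`, i.e. `V ≤ Λ • 1` in the Loewner order. -/

open Matrix Finset
open scoped MatrixOrder

namespace Matrix

variable {ι : Type*} [Fintype ι] [DecidableEq ι]

lemma pow_mul_apply_eq_sum_walks {R : Type*} [CommSemiring R] (A B : Matrix ι ι R) (m : ℕ)
    (i j : ι) :
    (A ^ m * B) i j = ∑ f : Fin m → ι,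
      (∏ t : Fin m, A ((Fin.cons i f : Fin (m + 1) → ι) t.castSucc)
        ((Fin.cons i f : Fin (m + 1) → ι) t.succ)) *
        B ((Fin.cons i f : Fin (m + 1) → ι) (Fin.last m)) j := by
  induction m generalizing i with
  | zero => simp
  | succ m ih =>
    rw [pow_succ', mul_assoc, mul_apply, ← (Fin.consEquiv fun _ => ι).sum_comp,
      Fintype.sum_prod_type]
    refine sum_congr rfl fun k _ => ?_
    rw [ih, mul_sum]
    refine sum_congr rfl fun f _ => ?_
    simp [Fin.prod_univ_succ, mul_assoc]

lemma trace_pow_succ_eq_sum_cycles {R : Type*} [CommSemiring R] (A : Matrix ι ι R) (m : ℕ) :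
    trace (A ^ (m + 1)) = ∑ g : Fin (m + 1) → ι, ∏ t, A (g t) (g (finRotate (m + 1) t)) := by
  rw [← (Fin.consEquiv fun _ => ι).sum_comp, Fintype.sum_prod_type, trace]
  refine sum_congr rfl fun i _ => ?_
  rw [diag_apply, pow_succ, pow_mul_apply_eq_sum_walks]
  refine sum_congr rfl fun f _ => ?_
  simp [Fin.prod_univ_castSucc, Fin.coeSucc_eq_succ]

lemma IsHermitian.dotProduct_mulVec_le {A : Matrix ι ι ℝ} (hA : A.IsHermitian) {Λ : ℝ}
    (hΛ : ∀ μ ∈ spectrum ℝ A, μ ≤ Λ) (x : ι → ℝ) :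
    x ⬝ᵥ (A *ᵥ x) ≤ Λ * (x ⬝ᵥ x) := by
  have hpsd : (algebraMap ℝ _ Λ - A).PosSemidef :=
    Matrix.le_iff.mp (le_algebraMap_of_spectrum_le hΛ hA.isSelfAdjoint)
  have := hpsd.dotProduct_mulVec_nonneg x
  rw [Algebra.algebraMap_eq_smul_one, star_trivial, sub_mulVec, smul_mulVec, one_mulVec,
    dotProduct_sub, dotProduct_smul, smul_eq_mul] at this
  exact sub_nonneg.mp this

lemma IsHermitian.exists_isGreatest_spectrum [Nonempty ι] {A : Matrix ι ι ℝ}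
    (hA : A.IsHermitian) : ∃ Λ, IsGreatest (spectrum ℝ A) Λ := by
  obtain ⟨Λ, hΛ, hmax⟩ := Set.exists_max_image _ id A.finite_real_spectrum
    ⟨_, hA.eigenvalues_mem_spectrum_real (Classical.arbitrary ι)⟩
  exact ⟨Λ, hΛ, hmax⟩

end Matrix

lemma Fintype.sum_arrow_prod {κ α β M : Type*} [Fintype κ] [DecidableEq κ] [Fintype α]
    [Fintype β] [AddCommMonoid M] (h : (κ → α × β) → M) :
    ∑ g, h g = ∑ a : κ → α, ∑ b : κ → β, h fun t => (a t, b t) := by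
  rw [← (Equiv.arrowProdEquivProdArrow κ _ _).symm.sum_comp, Fintype.sum_prod_type]
  rfl

/-- `cyclicTrace m F σ = Tr(F(σ₀,σ₁) F(σ₁,σ₂) ⋯ F(σ_{m-1},σ₀))`, expanded over closed walks. -/
noncomputable def cyclicTrace {κ ι : Type*} [Fintype ι] (m : ℕ) (F : κ → κ → Matrix ι ι ℝ)
    (σ : Fin m → κ) : ℝ :=
  ∑ α : Fin m → ι, ∏ t, F (σ t) (σ (finRotate m t)) (α t) (α (finRotate m t))

section TransferMatrices

variable {n : ℕ} (F : Fin 2 → Fin 2 → Matrix (Fin n) (Fin n) ℝ)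

lemma trace_Rmat_pow_succ (m : ℕ) :
    trace (Rmat n F ^ (m + 1)) = cyclicTrace (m + 1) F ⬝ᵥ cyclicTrace (m + 1) F := by
  rw [trace_pow_succ_eq_sum_cycles]
  simp_rw [Fintype.sum_arrow_prod, Rmat, of_apply, prod_mul_distrib]
  rw [sum_comm]
  refine sum_congr rfl fun σ _ => ?_
  rw [cyclicTrace, sum_mul_sum]

lemma trace_Smat_pow_succ (ω : Fin 2 → Fin 2 → Fin 2 → Fin 2 → ℝ) (m : ℕ) :
    trace (Smat n F ω ^ (m + 1)) =
      cyclicTrace (m + 1) F ⬝ᵥ (Vmat (m + 1) ω *ᵥ cyclicTrace (m + 1) F) := by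
  rw [trace_pow_succ_eq_sum_cycles]
  simp_rw [Fintype.sum_arrow_prod, Smat, of_apply, prod_mul_distrib]
  rw [sum_comm]
  simp only [dotProduct, mulVec, cyclicTrace, sum_mul, mul_sum]
  refine sum_congr rfl fun σ _ => ?_
  rw [sum_comm]
  refine sum_congr rfl fun τ _ => ?_
  rw [sum_comm]
  simp only [Vmat, of_apply, mul_assoc]

end TransferMatrices

lemma isHermitian_Vmat {m : ℕ} {ω : Fin 2 → Fin 2 → Fin 2 → Fin 2 → ℝ}
    (hω : ∀ a b c d : Fin 2, ω a b c d = ω b a d c) : (Vmat m ω).IsHermitian :=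
  IsHermitian.ext fun σ τ => by
    simp only [star_trivial, Vmat, of_apply]
    exact prod_congr rfl fun i _ => (hω _ _ _ _).symm

theorem largest_eigenvalue_V_ge_trace_ratio_general (n m : ℕ) (hm : 1 ≤ m)
    (F : Fin 2 → Fin 2 → Matrix (Fin n) (Fin n) ℝ)
    (ω : Fin 2 → Fin 2 → Fin 2 → Fin 2 → ℝ)
    (hω : ∀ a b c d : Fin 2, ω a b c d = ω b a d c)
    (hR : 0 < Matrix.trace (Rmat n F ^ m)) :
    ∃ Λ : ℝ, IsGreatest (spectrum ℝ (Vmat m ω)) Λ ∧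
      Matrix.trace (Smat n F ω ^ m) / Matrix.trace (Rmat n F ^ m) ≤ Λ := by
  obtain ⟨k, rfl⟩ := Nat.exists_eq_add_of_le' hm
  have hV := isHermitian_Vmat (m := k + 1) hω
  obtain ⟨Λ, hΛ⟩ := hV.exists_isGreatest_spectrum
  refine ⟨Λ, hΛ, ?_⟩
  rw [div_le_iff₀ hR, trace_Smat_pow_succ, trace_Rmat_pow_succ]
  exact hV.dotProduct_mulVec_le hΛ.2 _

/-- If `ω(a,b;c,d) = ω(b,a;d,c)` (so that `V` is symmetric) and
`Tr(R^m) > 0`, then the largest eigenvalue `Λ(m)` of `V` satisfies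
`Λ(m) ≥ Tr(S^m) / Tr(R^m)`. -/
theorem largest_eigenvalue_V_ge_trace_ratio (n m : ℕ) (hn : 1 ≤ n) (hm : 1 ≤ m)
    (F : Fin 2 → Fin 2 → Matrix (Fin n) (Fin n) ℝ)
    (ω : Fin 2 → Fin 2 → Fin 2 → Fin 2 → ℝ)
    (hω : ∀ a b c d : Fin 2, ω a b c d = ω b a d c)
    (hR : 0 < Matrix.trace (Rmat n F ^ m)) :
    ∃ Λ : ℝ, IsGreatest (spectrum ℝ (Vmat m ω)) Λ ∧
      Matrix.trace (Smat n F ω ^ m) / Matrix.trace (Rmat n F ^ m) ≤ Λ :=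
  largest_eigenvalue_V_ge_trace_ratio_general n m hm F ω hω hR
end
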